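/- arXiv:2604.00638 — 4 statements merged into one kernel-verified Lean document; each statement's English description precedes it below -/
import Mathlib

section
/- Let n ≥ 3, a = (n-1)n/2, and S = ⟨a, a+1, a+2⟩. For a natural number r, write r = a·ℓ + ε with ℓ = ⌊r/a⌋ and 0 ≤ ε < a. Then r ∈ S if and only if ε ≤ 2ℓ. -/
/-!
Each generator of `⟨a, a+1, a+2⟩` is `a` plus an excess in `{0, 1, 2}`, so the sums of `m`
generators are exactly the numbers `m * a + s` with `s ≤ 2 * m`. Such a number has quotient
`m + s / a ≥ m` and remainder `s % a ≤ s` on division by `a`; conversely, `r % a ≤ 2 * (r / a)`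
exhibits `r` itself in this form.
-/

theorem exists_mul_add_le_mul_iff_mod_le {a : ℕ} (ha : 0 < a) (k r : ℕ) :
    (∃ m s, s ≤ k * m ∧ m * a + s = r) ↔ r % a ≤ k * (r / a) := by
  constructor
  · rintro ⟨m, s, hs, rfl⟩
    have hmod : (m * a + s) % a = s % a := by rw [add_comm, Nat.add_mul_mod_self_right]
    have hdiv : (m * a + s) / a = s / a + m := by
      rw [add_comm, Nat.add_mul_div_right _ _ ha]
    rw [hmod, hdiv]
    calc s % a ≤ s := Nat.mod_le s a
      _ ≤ k * m := hs
      _ ≤ k * (s / a + m) := Nat.mul_le_mul_left k (Nat.le_add_left m _)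
  · intro h
    exact ⟨r / a, r % a, h, by rw [mul_comm]; exact Nat.div_add_mod r a⟩

theorem exists_consecutive_three_combination_iff (a r : ℕ) :
    (∃ α β γ : ℕ, α * a + β * (a + 1) + γ * (a + 2) = r) ↔
      ∃ m s, s ≤ 2 * m ∧ m * a + s = r := by
  constructor
  · rintro ⟨α, β, γ, rfl⟩
    exact ⟨α + β + γ, β + 2 * γ, by omega, by ring⟩
  · rintro ⟨m, s, hs, rfl⟩
    -- write the excess `s` as `β + 2γ` with `β ∈ {0, 1}`; `s ≤ 2m` leaves room for `α ≥ 0`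
    refine ⟨m - s % 2 - s / 2, s % 2, s / 2, ?_⟩
    have hm : (m - s % 2 - s / 2) + s % 2 + s / 2 = m := by omega
    calc (m - s % 2 - s / 2) * a + s % 2 * (a + 1) + s / 2 * (a + 2)
        = ((m - s % 2 - s / 2) + s % 2 + s / 2) * a + (s % 2 + 2 * (s / 2)) := by ring
      _ = m * a + s := by rw [hm, Nat.mod_add_div]

/-- Membership in the numerical semigroup `⟨a, a+1, a+2⟩`, `a = (n-1)n/2`, `n ≥ 3`,
is characterized by `ε ≤ 2ℓ`, where `ℓ = ⌊r/a⌋` and `ε = r - aℓ`. -/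
theorem stmt1 (n : ℕ) (hn : 3 ≤ n) (a : ℕ) (ha : a = (n - 1) * n / 2) (r : ℕ) :
    (∃ α β γ : ℕ, α * a + β * (a + 1) + γ * (a + 2) = r) ↔ r % a ≤ 2 * (r / a) := by
  have ha_pos : 0 < a := by
    rw [ha]
    exact Nat.div_pos (Nat.mul_le_mul (by omega : 1 ≤ n - 1) (by omega : 2 ≤ n)) two_pos
  rw [exists_consecutive_three_combination_iff, exists_mul_add_le_mul_iff_mod_le ha_pos]
end

section
/- Let n ≥ 3, a = (n-1)n/2, and S = ⟨a, a+1, a+2⟩. If r = a·u + v with natural numbers u, v satisfying 2u < v < a, then r ∉ S, and moreover u = ⌊r/a⌋ and v = r - a⌊r/a⌋. -/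
/-!
A sum of `k` generators of `⟨a, a + 1, a + 2⟩` lies between `k * a` and `k * (a + 2)`, so the
semigroup is contained in the union of the intervals `[k * a, k * a + 2 * k]`. Since `2 * u < v < a`,
the number `a * u + v` falls strictly between the `u`-th and the `(u + 1)`-st of these intervals.
-/

theorem sum_generators_mem_Icc (a α β γ : ℕ) :
    α * a + β * (a + 1) + γ * (a + 2) ∈ Set.Icc ((α + β + γ) * a) ((α + β + γ) * (a + 2)) := by
  constructor <;> nlinarith

theorem mul_add_not_mem_Icc {a u v : ℕ} (h1 : 2 * u < v) (h2 : v < a) (k : ℕ) :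
    a * u + v ∉ Set.Icc (k * a) (k * (a + 2)) := by
  rintro ⟨hlo, hhi⟩
  rcases le_or_gt k u with hk | hk
  · have : k * a ≤ u * a := Nat.mul_le_mul_right a hk
    nlinarith
  · have : (u + 1) * a ≤ k * a := Nat.mul_le_mul_right a hk
    nlinarith

theorem stmt2_general (a : ℕ)
    (u v r : ℕ) (h1 : 2 * u < v) (h2 : v < a) (hr : r = a * u + v) :
    (¬ ∃ α β γ : ℕ, α * a + β * (a + 1) + γ * (a + 2) = r) ∧ u = r / a ∧ v = r % a := by
  have ha : 0 < a := by omega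
  subst hr
  refine ⟨?_, ?_, ?_⟩
  · rintro ⟨α, β, γ, h⟩
    exact mul_add_not_mem_Icc h1 h2 (α + β + γ) (h ▸ sum_generators_mem_Icc a α β γ)
  · rw [Nat.mul_add_div ha, Nat.div_eq_of_lt h2, add_zero]
  · rw [Nat.mul_add_mod, Nat.mod_eq_of_lt h2]

/-- If `r = a*u + v` with `2u < v < a`, then `r` does not belong to the numerical
semigroup `⟨a, a+1, a+2⟩` (with `a = (n-1)n/2`, `n ≥ 3`), and moreover `u` and `v`
are the quotient and remainder of the division of `r` by `a`. -/
theorem stmt2 (n : ℕ) (hn : 3 ≤ n) (a : ℕ) (ha : a = (n - 1) * n / 2)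
    (u v r : ℕ) (h1 : 2 * u < v) (h2 : v < a) (hr : r = a * u + v) :
    (¬ ∃ α β γ : ℕ, α * a + β * (a + 1) + γ * (a + 2) = r) ∧ u = r / a ∧ v = r % a :=
  stmt2_general a u v r h1 h2 hr
end

section
/- Let n ≥ 6, a = (n-1)n/2, s₀ = a(n-1)+2, and S = ⟨a, a+1, a+2⟩. Then every integer r with s₀ ≤ r < s₀ + n belongs to S, and moreover ⌊r/a⌋ = n - 1 for all such r. -/
/-!
A sum of `m` generators `a`, `a + 1`, `a + 2` is `a * m + d` where `d` (the number of `a + 1`'s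
plus twice the number of `a + 2`'s) takes every value in `[0, 2m]`. With `m = n - 1`, every
`r ∈ [s₀, s₀ + n)` is `a * (n - 1) + d` with `2 ≤ d ≤ n + 1 ≤ 2(n - 1)`, and since `n + 2 ≤ a`
for `n ≥ 6` this offset `d` is also smaller than `a`, so `r / a = n - 1`.
-/

theorem exists_mul_add_mul_succ_add_mul_add_two_eq (a m d : ℕ) (hd : d ≤ 2 * m) :
    ∃ α β γ : ℕ, α * a + β * (a + 1) + γ * (a + 2) = a * m + d := by
  rcases le_total d m with hdm | hmd
  · obtain ⟨k, rfl⟩ := Nat.exists_eq_add_of_le hdm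
    exact ⟨k, d, 0, by ring⟩
  · obtain ⟨e, rfl⟩ := Nat.exists_eq_add_of_le hmd
    obtain ⟨f, rfl⟩ := Nat.exists_eq_add_of_le (show e ≤ m by omega)
    exact ⟨0, f, e, by ring⟩

theorem add_two_le_mul_pred_div_two (n : ℕ) (hn : 6 ≤ n) : n + 2 ≤ (n - 1) * n / 2 := by
  rw [Nat.le_div_iff_mul_le two_pos]
  obtain ⟨k, rfl⟩ := Nat.exists_eq_add_of_le hn
  rw [show 6 + k - 1 = k + 5 by omega]
  nlinarith

/-- For `n ≥ 6`, `a = (n-1)n/2`, `s₀ = a(n-1)+2`: every `r` with `s₀ ≤ r < s₀ + n`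
belongs to the numerical semigroup `⟨a, a+1, a+2⟩`, and `⌊r/a⌋ = n - 1`. -/
theorem stmt8 (n : ℕ) (hn : 6 ≤ n) (a s₀ : ℕ) (ha : a = (n - 1) * n / 2)
    (hs : s₀ = a * (n - 1) + 2) (r : ℕ) (h1 : s₀ ≤ r) (h2 : r < s₀ + n) :
    (∃ α β γ : ℕ, α * a + β * (a + 1) + γ * (a + 2) = r) ∧ r / a = n - 1 := by
  have hna : n + 2 ≤ a := ha ▸ add_two_le_mul_pred_div_two n hn
  obtain ⟨d, rfl⟩ : ∃ d, r = a * (n - 1) + d := ⟨r - a * (n - 1), by omega⟩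
  refine ⟨exists_mul_add_mul_succ_add_mul_add_two_eq a (n - 1) d (by omega), ?_⟩
  rw [Nat.mul_add_div (by omega), Nat.div_eq_of_lt (by omega), add_zero]
end

section
/- Let k be a field and D = k[[t^{a}+t^{a+q}, t^{a+1}, t^{a+2}]] ⊆ k[[t]], where n ≥ 3, a = (n-1)n/2, q = 2⌊(n+1)/2⌋-1. Then the subring D[t] of k[[t]] generated by D and t equals k[[t]]. -/
/-!
Every exponent `j ≥ a (a + 1)` is a sum of copies of `a + 1` and `a + 2`, so `tʲ` is a monomial in
the generators `t^{a+1}, t^{a+2}` of `D`. Hence `D` contains every series divisible by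
`t^{a (a + 1)}`, and any series is such a series plus a polynomial in `t`.
-/

theorem Nat.exists_add_mul_eq_of_mul_succ_le {a j : ℕ} (h : a * (a + 1) ≤ j) :
    ∃ x y : ℕ, (a + 1) * x + (a + 2) * y = j := by
  have hrem : j % (a + 1) ≤ j / (a + 1) :=
    (Nat.le_of_lt_succ (Nat.mod_lt j a.succ_pos)).trans
      ((Nat.le_div_iff_mul_le a.succ_pos).mpr h)
  obtain ⟨e, he⟩ := Nat.exists_eq_add_of_le hrem
  refine ⟨e, j % (a + 1), ?_⟩
  calc (a + 1) * e + (a + 2) * (j % (a + 1))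
      = (a + 1) * (j % (a + 1) + e) + j % (a + 1) := by ring
    _ = j := by rw [← he, Nat.div_add_mod]

open scoped PowerSeries Polynomial

namespace PowerSeries

variable {R : Type*} [CommRing R]

theorem X_pow_mem_of_mul_succ_le {A : Subalgebra R R⟦X⟧} {a j : ℕ}
    (h₁ : (X : R⟦X⟧) ^ (a + 1) ∈ A) (h₂ : (X : R⟦X⟧) ^ (a + 2) ∈ A) (hj : a * (a + 1) ≤ j) :
    (X : R⟦X⟧) ^ j ∈ A := by
  obtain ⟨x, y, rfl⟩ := Nat.exists_add_mul_eq_of_mul_succ_le hj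
  rw [pow_add, pow_mul, pow_mul]
  exact mul_mem (pow_mem h₁ x) (pow_mem h₂ y)

theorem coe_mem_adjoin_X (p : R[X]) : (p : R⟦X⟧) ∈ Algebra.adjoin R {X} := by
  rw [← Polynomial.eval₂_C_X_eq_coe]
  exact Polynomial.aeval_mem_adjoin_singleton R X

theorem X_pow_dvd_sub_trunc (n : ℕ) (f : R⟦X⟧) : X ^ n ∣ f - (trunc n f : R⟦X⟧) :=
  ⟨_, sub_eq_iff_eq_add.mpr (eq_X_pow_mul_shift_add_trunc n f)⟩

theorem X_pow_mul_coe_mem {A : Subalgebra R R⟦X⟧} {M : ℕ} (hA : ∀ j, M ≤ j → X ^ j ∈ A)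
    (p : R[X]) : X ^ M * (p : R⟦X⟧) ∈ A := by
  induction p using Polynomial.induction_on' with
  | add p q hp hq => rw [Polynomial.coe_add, mul_add]; exact add_mem hp hq
  | monomial n r =>
    rw [Polynomial.coe_monomial, monomial_eq_C_mul_X_pow, mul_left_comm, ← pow_add]
    exact mul_mem (Subalgebra.algebraMap_mem A r) (hA _ (Nat.le_add_right M n))

theorem exists_mem_sub_mem_span_X_pow {A : Subalgebra R R⟦X⟧} {M : ℕ}
    (hA : ∀ j, M ≤ j → X ^ j ∈ A) {f : R⟦X⟧} (hf : X ^ M ∣ f) (m : ℕ) :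
    ∃ g ∈ A, f - g ∈ Ideal.span {(X : R⟦X⟧) ^ m} := by
  obtain ⟨h, rfl⟩ := hf
  refine ⟨X ^ M * (trunc m h : R⟦X⟧), X_pow_mul_coe_mem hA _, ?_⟩
  rw [Ideal.mem_span_singleton, ← mul_sub]
  exact dvd_mul_of_dvd_right (X_pow_dvd_sub_trunc m h) _

theorem adjoin_union_X_eq_top {C : Set R⟦X⟧} {M : ℕ} (hC : ∀ f, X ^ M ∣ f → f ∈ C) :
    Algebra.adjoin R (C ∪ {X}) = ⊤ := by
  refine eq_top_iff.mpr fun f _ => ?_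
  rw [eq_X_pow_mul_shift_add_trunc M f]
  exact add_mem (Algebra.subset_adjoin (Or.inl (hC _ (dvd_mul_right _ _))))
    (Algebra.adjoin_mono Set.subset_union_right (coe_mem_adjoin_X _))

end PowerSeries

theorem stmt18_general (k : Type*) [Field k] (a q : ℕ)
    (D : Set (PowerSeries k))
    (hD : D = {f : PowerSeries k | ∀ m : ℕ,
      ∃ g ∈ Algebra.adjoin k
        ({PowerSeries.X ^ a + PowerSeries.X ^ (a + q), PowerSeries.X ^ (a + 1),
          PowerSeries.X ^ (a + 2)} : Set (PowerSeries k)),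
        f - g ∈ Ideal.span {(PowerSeries.X : PowerSeries k) ^ m}}) :
    Algebra.adjoin k (D ∪ {(PowerSeries.X : PowerSeries k)}) = ⊤ := by
  subst hD
  refine PowerSeries.adjoin_union_X_eq_top (M := a * (a + 1)) fun f hf m =>
    PowerSeries.exists_mem_sub_mem_span_X_pow (fun j hj => ?_) hf m
  exact PowerSeries.X_pow_mem_of_mul_succ_le
    (Algebra.subset_adjoin (by simp)) (Algebra.subset_adjoin (by simp)) hj

/-- Let `D = k[[tᵃ + t^{a+q}, t^{a+1}, t^{a+2}]] ⊆ k[[t]]`, the closed `k`-subalgebra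
(topologically) generated by the three given elements, described here algebraically:
`f ∈ D` iff for every `m` there is `g` in the (algebraic) `k`-subalgebra generated by
the three elements with `f - g ∈ (t^m)`. Then the subring `D[t]` generated by `D`
together with `t` is all of `k[[t]]`. -/
theorem stmt18 (k : Type*) [Field k] (n : ℕ) (hn : 3 ≤ n) (a q : ℕ)
    (ha : a = (n - 1) * n / 2) (hq : q = 2 * ((n + 1) / 2) - 1)
    (D : Set (PowerSeries k))
    (hD : D = {f : PowerSeries k | ∀ m : ℕ,
      ∃ g ∈ Algebra.adjoin k
        ({PowerSeries.X ^ a + PowerSeries.X ^ (a + q), PowerSeries.X ^ (a + 1),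
          PowerSeries.X ^ (a + 2)} : Set (PowerSeries k)),
        f - g ∈ Ideal.span {(PowerSeries.X : PowerSeries k) ^ m}}) :
    Algebra.adjoin k (D ∪ {(PowerSeries.X : PowerSeries k)}) = ⊤ :=
  stmt18_general k a q D hD
end
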